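/- arXiv:0811.0699 — 2 statements merged into one kernel-verified Lean document; each statement's English description precedes it below -/
import Mathlib

section
/- Let f : {0,1}^n → {0,1} be a Boolean function and let S be the set of all x ∈ {0,1}^n such that every chain starting with x has decrease 0 with respect to f. Define f_1 by f_1(x) = f(x) if x ∈ S and f_1(x) = 0 otherwise. Then d(f_1) = 0; that is, f_1 is monotone. -/
namespace InversionComplexity

open Classical

/-- A chain is a strictly increasing sequence of Boolean vectors in `{0,1}^n`
(pointwise order on `Fin n → Bool`). -/
def IsChain {n : ℕ} (X : List (Fin n → Bool)) : Prop :=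
  X.Chain' (· < ·)

/-- The decrease `d_X(f)` of `f` on a sequence `X`: the number of consecutive
indices `i` with `f (x^i) = 1` and `f (x^{i+1}) = 0`. -/
def decOn {n : ℕ} (f : (Fin n → Bool) → Bool) : List (Fin n → Bool) → ℕ
  | a :: b :: t => (if f a = true ∧ f b = false then 1 else 0) + decOn f (b :: t)
  | _ => 0

/-- The decrease `d(f)` of `f`: the maximum of `d_X(f)` over all chains `X`. -/
noncomputable def dec {n : ℕ} (f : (Fin n → Bool) → Bool) : ℕ :=
  sSup { m | ∃ X : List (Fin n → Bool), IsChain X ∧ decOn f X = m }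

/-- Boolean formulas: finite trees built from variable leaves, constant leaves,
binary AND/OR nodes and unary NOT nodes. -/
inductive Formula (n : ℕ) : Type
  | var : Fin n → Formula n
  | const : Bool → Formula n
  | and : Formula n → Formula n → Formula n
  | or : Formula n → Formula n → Formula n
  | not : Formula n → Formula n

/-- Evaluation of a formula on an input. -/
def Formula.eval {n : ℕ} (x : Fin n → Bool) : Formula n → Bool
  | .var i => x i
  | .const b => b
  | .and C D => C.eval x && D.eval x
  | .or C D => C.eval x || D.eval x
  | .not C => !(C.eval x)

/-- `not(C)`: the number of NOT nodes of a formula. -/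
def Formula.notCount {n : ℕ} : Formula n → ℕ
  | .var _ => 0
  | .const _ => 0
  | .and C D => C.notCount + D.notCount
  | .or C D => C.notCount + D.notCount
  | .not C => C.notCount + 1

/-- `not_d(C, x)`: the number of NOT nodes of `C` in the *down* state on input `x`,
i.e. whose input subformula evaluates to `1`. -/
def Formula.notDown {n : ℕ} (x : Fin n → Bool) : Formula n → ℕ
  | .var _ => 0
  | .const _ => 0
  | .and C D => C.notDown x + D.notDown x
  | .or C D => C.notDown x + D.notDown x
  | .not C => C.notDown x + (if C.eval x = true then 1 else 0)

/-- A formula computes a Boolean function `f` if it evaluates to `f x` on every input `x`. -/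
def Formula.Computes {n : ℕ} (C : Formula n) (f : (Fin n → Bool) → Bool) : Prop :=
  ∀ x, C.eval x = f x

/-- `I_f(f)`: the inversion complexity of `f` in formulas, the minimum number of
NOT nodes over all formulas computing `f`. -/
noncomputable def invFormula {n : ℕ} (f : (Fin n → Bool) → Bool) : ℕ :=
  sInf { k | ∃ C : Formula n, C.Computes f ∧ C.notCount = k }

/-- The set `S` of all vectors `x` such that every chain starting with `x`
has decrease `0` with respect to `f`. -/
def startSet {n : ℕ} (f : (Fin n → Bool) → Bool) : Set (Fin n → Bool) :=
  { x | ∀ X : List (Fin n → Bool), IsChain X → X.head? = some x → decOn f X = 0 }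

section

variable {n : ℕ}

lemma decOn_eq_zero_of_monotone {g : (Fin n → Bool) → Bool} (hg : Monotone g) :
    ∀ X : List (Fin n → Bool), IsChain X → decOn g X = 0
  | [], _ | [_], _ => rfl
  | a :: b :: t, h => by
    rw [IsChain, List.Chain', List.isChain_cons_cons] at h
    have hab : ¬(g a = true ∧ g b = false) := fun ⟨ha, hb⟩ => by
      have hle := hg h.1.le
      rw [ha, hb] at hle
      exact absurd hle (by decide)
    simp only [decOn, if_neg hab, zero_add]
    exact decOn_eq_zero_of_monotone hg (b :: t) h.2

lemma dec_eq_zero_of_monotone {g : (Fin n → Bool) → Bool} (hg : Monotone g) :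
    dec g = 0 := by
  have hset : { m | ∃ X : List (Fin n → Bool), IsChain X ∧ decOn g X = m } = {0} := by
    ext m
    constructor
    · rintro ⟨X, hX, rfl⟩
      exact decOn_eq_zero_of_monotone hg X hX
    · rintro rfl
      exact ⟨[], List.isChain_nil, rfl⟩
  rw [dec, hset, csSup_singleton]

lemma IsChain.cons {x y : Fin n → Bool} {t : List (Fin n → Bool)}
    (hxy : x < y) (h : IsChain (y :: t)) : IsChain (x :: y :: t) :=
  List.isChain_cons_cons.mpr ⟨hxy, h⟩

variable {f : (Fin n → Bool) → Bool}

lemma decOn_cons_cons_eq_zero {x y : Fin n → Bool} {t : List (Fin n → Bool)}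
    (h : decOn f (x :: y :: t) = 0) :
    ¬(f x = true ∧ f y = false) ∧ decOn f (y :: t) = 0 := by
  simp only [decOn] at h
  split_ifs at h with hxy
  · omega
  · exact ⟨hxy, by omega⟩

lemma mem_startSet_of_le {x y : Fin n → Bool} (hx : x ∈ startSet f) (hxy : x ≤ y) :
    y ∈ startSet f := by
  rcases hxy.eq_or_lt with rfl | hlt
  · exact hx
  rintro (_ | ⟨b, t⟩) hX hhead
  · simp at hhead
  obtain rfl : b = y := by simpa using hhead
  exact (decOn_cons_cons_eq_zero (hx _ (hX.cons hlt) rfl)).2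

lemma apply_le_of_mem_startSet {x y : Fin n → Bool} (hx : x ∈ startSet f) (hxy : x ≤ y) :
    f x ≤ f y := by
  rcases hxy.eq_or_lt with rfl | hlt
  · exact le_rfl
  have hchain : IsChain [x, y] := IsChain.cons hlt (List.isChain_singleton y)
  have hnot := (decOn_cons_cons_eq_zero (hx _ hchain rfl)).1
  revert hnot
  cases f x <;> cases f y <;> decide

lemma monotone_ite_mem_startSet (f : (Fin n → Bool) → Bool) :
    Monotone (fun x => if x ∈ startSet f then f x else false) := by
  intro x y hxy
  by_cases hx : x ∈ startSet f
  · simpa [hx, mem_startSet_of_le hx hxy] using apply_le_of_mem_startSet hx hxy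
  · simp [hx]

end

/-- If `f₁ x = f x` for `x ∈ S` and `f₁ x = 0` otherwise, then `d(f₁) = 0`,
i.e. `f₁` is monotone. -/
theorem decrease_f1_eq_zero (n : ℕ) (f : (Fin n → Bool) → Bool) :
    dec (fun x => if x ∈ startSet f then f x else false) = 0 ∧
    Monotone (fun x => if x ∈ startSet f then f x else false) :=
  ⟨dec_eq_zero_of_monotone (monotone_ite_mem_startSet f), monotone_ite_mem_startSet f⟩

end InversionComplexity
end

section
/- Let f : {0,1}^n → {0,1} be a Boolean function with d(f) ≥ 1 and let S be the set of all x ∈ {0,1}^n such that every chain starting with x has decrease 0 with respect to f. Define f_2 by f_2(x) = 1 if x ∈ S and f_2(x) = f(x) otherwise. Then d(f_2) ≤ d(f) − 1. -/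
namespace InversionComplexity

open Classical

/-!
`S` is an upper set, so along a chain the points outside `S` form an initial segment, on which
`f₂ = f`, while `f₂ = 1` on the rest. Hence `d_X(f₂)` is the decrease of `f` on that initial
segment; since its last point `x` lies outside `S`, some chain starting at `x` has a decrease
of `f`, and appending it to the segment yields a chain on which `f` decreases `d_X(f₂) + 1` times.
-/

variable {n : ℕ}

section Chains

variable {a b : Fin n → Bool} {X : List (Fin n → Bool)}

theorem isChain_cons_cons : IsChain (a :: b :: X) ↔ a < b ∧ IsChain (b :: X) :=
  List.isChain_cons_cons

theorem IsChain.le_of_mem (h : IsChain (a :: X)) {y : Fin n → Bool} (hy : y ∈ a :: X) :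
    a ≤ y := by
  rcases List.mem_cons.1 hy with rfl | hy
  · exact le_rfl
  · exact ((List.pairwise_cons.1 (List.isChain_iff_pairwise.1 h)).1 y hy).le

theorem IsChain.nodup (h : IsChain X) : X.Nodup :=
  (List.isChain_iff_pairwise.1 h).imp ne_of_lt

end Chains

section Decrease

variable (f : (Fin n → Bool) → Bool)

@[simp]
theorem decOn_cons_cons (a b : Fin n → Bool) (X : List (Fin n → Bool)) :
    decOn f (a :: b :: X) = (if f a = true ∧ f b = false then 1 else 0) + decOn f (b :: X) :=
  rfl

theorem decOn_le_length : ∀ X : List (Fin n → Bool), decOn f X ≤ X.length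
  | [] | [_] => Nat.zero_le _
  | a :: b :: X => by
    have := decOn_le_length (b :: X)
    simp only [decOn_cons_cons, List.length_cons] at this ⊢
    split <;> omega

theorem decOn_le_decOn_cons (a : Fin n → Bool) : ∀ X : List (Fin n → Bool),
    decOn f X ≤ decOn f (a :: X)
  | [] => le_rfl
  | _ :: _ => Nat.le_add_left _ _

theorem decOn_cons_eq_zero (a : Fin n → Bool) :
    ∀ X : List (Fin n → Bool), (∀ y ∈ X, f y = true) → decOn f (a :: X) = 0
  | [], _ => rfl
  | b :: X, hX => by
    rw [decOn_cons_cons, decOn_cons_eq_zero b X fun y hy => hX y (List.mem_cons_of_mem b hy),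
      hX b List.mem_cons_self]
    simp

theorem bddAbove_decOn : BddAbove { m | ∃ X : List (Fin n → Bool), IsChain X ∧ decOn f X = m } :=
  ⟨Fintype.card (Fin n → Bool), by
    rintro m ⟨X, hX, rfl⟩
    exact (decOn_le_length f X).trans hX.nodup.length_le_card⟩

variable {f}

theorem decOn_le_dec {X : List (Fin n → Bool)} (hX : IsChain X) : decOn f X ≤ dec f :=
  le_csSup (bddAbove_decOn f) ⟨X, hX, rfl⟩

theorem dec_le_of_forall {m : ℕ} (h : ∀ X, IsChain X → decOn f X ≤ m) : dec f ≤ m :=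
  csSup_le ⟨0, [], List.isChain_nil, rfl⟩ fun _ ⟨X, hX, hm⟩ => hm ▸ h X hX

end Decrease

section StartSet

variable {f : (Fin n → Bool) → Bool}

theorem isUpperSet_startSet (f : (Fin n → Bool) → Bool) : IsUpperSet (startSet f) := by
  intro x y hxy hx Y hY hYy
  obtain ⟨Z, rfl⟩ := List.head?_eq_some_iff.1 hYy
  rcases hxy.eq_or_lt with rfl | hlt
  · exact hx _ hY rfl
  · have hxY : decOn f (x :: y :: Z) = 0 := hx _ (isChain_cons_cons.2 ⟨hlt, hY⟩) rfl
    have := decOn_le_decOn_cons f x (y :: Z)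
    omega

theorem exists_decOn_pos_of_notMem_startSet {a : Fin n → Bool} (ha : a ∉ startSet f) :
    ∃ Z, IsChain (a :: Z) ∧ 0 < decOn f (a :: Z) := by
  obtain ⟨Y, hY, hYa, hpos⟩ : ∃ Y, IsChain Y ∧ Y.head? = some a ∧ decOn f Y ≠ 0 := by
    simpa [startSet] using ha
  obtain ⟨Z, rfl⟩ := List.head?_eq_some_iff.1 hYa
  exact ⟨Z, hY, Nat.pos_of_ne_zero hpos⟩

/-- The function `f₂` of the paper. -/
noncomputable def fillStartSet (f : (Fin n → Bool) → Bool) : (Fin n → Bool) → Bool :=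
  fun x => if x ∈ startSet f then true else f x

theorem fillStartSet_of_mem {x : Fin n → Bool} (hx : x ∈ startSet f) : fillStartSet f x = true :=
  if_pos hx

theorem fillStartSet_of_notMem {x : Fin n → Bool} (hx : x ∉ startSet f) :
    fillStartSet f x = f x :=
  if_neg hx

theorem fillStartSet_of_mem_chain {b y : Fin n → Bool} {X : List (Fin n → Bool)}
    (hX : IsChain (b :: X)) (hb : b ∈ startSet f) (hy : y ∈ b :: X) : fillStartSet f y = true :=
  fillStartSet_of_mem (isUpperSet_startSet f (hX.le_of_mem hy) hb)

theorem exists_decOn_fillStartSet_lt : ∀ {a : Fin n → Bool} {X : List (Fin n → Bool)},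
    IsChain (a :: X) → a ∉ startSet f →
      ∃ Z, IsChain (a :: Z) ∧ decOn (fillStartSet f) (a :: X) < decOn f (a :: Z)
  | _, [], _, ha => exists_decOn_pos_of_notMem_startSet ha
  | a, b :: X, hX, ha => by
    rw [isChain_cons_cons] at hX
    by_cases hb : b ∈ startSet f
    · rw [decOn_cons_eq_zero _ a _ fun _ => fillStartSet_of_mem_chain hX.2 hb]
      exact exists_decOn_pos_of_notMem_startSet ha
    · obtain ⟨Z, hZ, hlt⟩ := exists_decOn_fillStartSet_lt hX.2 hb
      refine ⟨b :: Z, isChain_cons_cons.2 ⟨hX.1, hZ⟩, ?_⟩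
      rw [decOn_cons_cons, decOn_cons_cons, fillStartSet_of_notMem ha, fillStartSet_of_notMem hb]
      omega

end StartSet

theorem decrease_f2_le_general (n : ℕ) (f : (Fin n → Bool) → Bool) :
    dec (fun x => if x ∈ startSet f then true else f x) ≤ dec f - 1 := by
  change dec (fillStartSet f) ≤ dec f - 1
  refine dec_le_of_forall fun X hX => ?_
  match X, hX with
  | [], _ => exact Nat.zero_le _
  | a :: X, hX =>
    by_cases ha : a ∈ startSet f
    · rw [decOn_cons_eq_zero _ a X fun _ hy =>
        fillStartSet_of_mem_chain hX ha (List.mem_cons_of_mem a hy)]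
      exact Nat.zero_le _
    · obtain ⟨Z, hZ, hlt⟩ := exists_decOn_fillStartSet_lt hX ha
      exact Nat.le_sub_one_of_lt (hlt.trans_le (decOn_le_dec hZ))

/-- If `d(f) ≥ 1` and `f₂ x = 1` for `x ∈ S`, `f₂ x = f x` otherwise,
then `d(f₂) ≤ d(f) - 1`. -/
theorem decrease_f2_le (n : ℕ) (f : (Fin n → Bool) → Bool) (hf : 1 ≤ dec f) :
    dec (fun x => if x ∈ startSet f then true else f x) ≤ dec f - 1 :=
  decrease_f2_le_general n f

end InversionComplexity
end
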